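/- Let A be a ⊖-algebra and let x, y be prime ideals of A such that there exists c ∈ A with ¬c ∉ x and c ∉ y. Then the set x ⋆ y := {a ∈ A | for all b ∉ y, a ⊖ b ∈ x} is again a prime ideal of A. -/
import Mathlib


class OminusAlgebra (A : Type*) extends DistribLattice A, BoundedOrder A where
  ominus : A → A → A
  inf_ominus : ∀ a b c : A, ominus (a ⊓ b) c = ominus a c ⊓ ominus b c
  sup_ominus : ∀ a b c : A, ominus (a ⊔ b) c = ominus a c ⊔ ominus b c
  ominus_inf : ∀ a b c : A, ominus a (b ⊓ c) = ominus a b ⊔ ominus a c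
  ominus_sup : ∀ a b c : A, ominus a (b ⊔ c) = ominus a b ⊓ ominus a c
  bot_ominus : ∀ a : A, ominus ⊥ a = ⊥
  ominus_top : ∀ a : A, ominus a ⊤ = ⊥
  ominus_bot : ∀ a : A, ominus a ⊥ = a

infixl:65 " ⊖ " => OminusAlgebra.ominus

variable {A : Type*} [OminusAlgebra A]

def oneg (a : A) : A := ⊤ ⊖ a

def oplus (a b : A) : A := oneg (oneg a ⊖ b)

def IsPrimeIdeal (x : Set A) : Prop :=
  x.Nonempty ∧ (∀ a b : A, a ≤ b → b ∈ x → a ∈ x) ∧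
    (∀ a b : A, a ∈ x → b ∈ x → a ⊔ b ∈ x) ∧ x ≠ Set.univ ∧
    (∀ a b : A, a ⊓ b ∈ x → a ∈ x ∨ b ∈ x)

def ineg (x : Set A) : Set A := {a | oneg a ∉ x}

def domPlus (x y : Set A) : Prop := y ⊆ ineg x

def pplus (x y : Set A) : Set A := {a | ∃ b ∈ y, a ⊖ b ∈ x}

def domStar (x y : Set A) : Prop := ¬ ineg x ⊆ y

def pstar (x y : Set A) : Set A := {a | ∀ b ∉ y, a ⊖ b ∈ x}


lemma ominus_mono_left' {A : Type*} [OminusAlgebra A] {a b : A} (c : A) (h : a ≤ b) :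
    a ⊖ c ≤ b ⊖ c := by
  have h2 := OminusAlgebra.inf_ominus a b c
  rw [inf_eq_left.mpr h] at h2
  rw [h2]; exact inf_le_right

lemma ominus_anti_right' {A : Type*} [OminusAlgebra A] (a : A) {b c : A} (h : b ≤ c) :
    a ⊖ c ≤ a ⊖ b := by
  have h2 := OminusAlgebra.ominus_inf a b c
  rw [inf_eq_left.mpr h] at h2
  rw [h2]; exact le_sup_right

theorem stmt10 {A : Type*} [OminusAlgebra A] (x y : Set A)
    (hx : IsPrimeIdeal x) (hy : IsPrimeIdeal y)
    (h : ∃ c : A, oneg c ∉ x ∧ c ∉ y) :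
    IsPrimeIdeal (pstar x y) := by
  obtain ⟨⟨a0, ha0⟩, hdown, hjoin, hproper, hprime⟩ := hx
  obtain ⟨_, _, _, _, hyprime⟩ := hy
  have hbotx : (⊥ : A) ∈ x := hdown ⊥ a0 bot_le ha0
  refine ⟨⟨⊥, fun b _ => by rw [OminusAlgebra.bot_ominus]; exact hbotx⟩,
    fun a b hab hb c hc => hdown _ _ (ominus_mono_left' c hab) (hb c hc),
    fun a b ha hb c hc => by rw [OminusAlgebra.sup_ominus]; exact hjoin _ _ (ha c hc) (hb c hc),
    ?_, ?_⟩
  · obtain ⟨c, hcx, hcy⟩ := h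
    intro heq
    have : (⊤ : A) ∈ pstar x y := heq ▸ Set.mem_univ ⊤
    exact hcx (this c hcy)
  · intro a b hab
    by_contra hcon
    push_neg at hcon
    obtain ⟨ha, hb⟩ := hcon
    simp only [pstar, Set.mem_setOf_eq, not_forall] at ha hb
    obtain ⟨b1, hb1y, hb1x⟩ := ha
    obtain ⟨b2, hb2y, hb2x⟩ := hb
    have h12 : b1 ⊓ b2 ∉ y := fun hm => (hyprime b1 b2 hm).elim hb1y hb2y
    have hmem := hab (b1 ⊓ b2) h12
    rw [OminusAlgebra.inf_ominus] at hmem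
    rcases hprime _ _ hmem with hc | hc
    · exact hb1x (hdown _ _ (ominus_anti_right' a inf_le_left) hc)
    · exact hb2x (hdown _ _ (ominus_anti_right' b inf_le_right) hc)
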